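/- Let δ > 0, let 0 < ε₁ ≤ δ and 0 < ε₂ ≤ δ, and for 0 < ε ≤ δ set U_ε^δ := {(x,y) ∈ ℝ × (0,∞) : |x| ≤ δ/2 and max(2|x|, ε) < y ≤ δ}. Then for all real x₁, x₂, the hyperbolic measure of the symmetric difference of the two translated truncated regions satisfies λ((U_{ε₁}^δ + x₁) Δ (U_{ε₂}^δ + x₂)) ≤ 2·(|x₁ − x₂| + |ε₁ − ε₂|) / min(ε₁, ε₂). -/

import Mathlib

open MeasureTheory

/-- The hyperbolic measure `λ(A) = ∬_A y⁻² dx dy` on the upper half-plane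
`ℍ = {(x,y) : y > 0}`. -/
noncomputable def hypMeasure : Measure (ℝ × ℝ) :=
  (volume.restrict {p : ℝ × ℝ | 0 < p.2}).withDensity fun p => ENNReal.ofReal (1 / p.2 ^ 2)

/-- The horizontal translate `A + t = {(x + t, y) : (x, y) ∈ A}`. -/
def htrans (A : Set (ℝ × ℝ)) (t : ℝ) : Set (ℝ × ℝ) := {p : ℝ × ℝ | (p.1 - t, p.2) ∈ A}

/-- The truncated region
`U_ε^δ := {(x,y) ∈ ℝ × (0,∞) : |x| ≤ δ/2 ∧ max(2|x|, ε) < y ≤ δ}`. -/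
def Utrunc (ε δ : ℝ) : Set (ℝ × ℝ) :=
  {p : ℝ × ℝ | |p.1| ≤ δ / 2 ∧ max (2 * |p.1|) ε < p.2 ∧ p.2 ≤ δ}

/-!
Pass through the intermediate region `U_{ε₂}^δ + x₁`. Changing only the cutoff moves points in
the strip `min ε₁ ε₂ < y ≤ max ε₁ ε₂`, where horizontal sections have length at most `y`.
Changing only the shift replaces each horizontal section, an interval of length `y` (or empty),
by its translate by `x₂ - x₁`, which differs from it in measure at most `2|x₁ - x₂|`; this happens
only above height `ε₂`. Since `λ` is Lebesgue measure times `y⁻² dy`, integrating these section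
bounds gives `|ε₁ - ε₂| / min ε₁ ε₂` and `2|x₁ - x₂| / ε₂`.
-/

open Set Filter Topology
open scoped ENNReal symmDiff

namespace MeasureTheory.Measure

variable {α β : Type*} [MeasurableSpace α] [MeasurableSpace β] {μ : Measure α} {ν : Measure β}

theorem prod_apply_le_mul_of_sections_le [SFinite μ] [SFinite ν] {s : Set (α × β)}
    (hs : MeasurableSet s) {t : Set β} (ht : MeasurableSet t) (hst : s ⊆ Prod.snd ⁻¹' t) {c : ℝ≥0∞}
    (hc : ∀ y ∈ t, μ ((fun x => (x, y)) ⁻¹' s) ≤ c) :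
    μ.prod ν s ≤ c * ν t := by
  rw [prod_apply_symm hs, ← lintegral_indicator_const ht]
  refine lintegral_mono fun y => ?_
  by_cases hy : y ∈ t
  · simpa [hy] using hc y hy
  · have : (fun x => (x, y)) ⁻¹' s = ∅ :=
      eq_empty_of_forall_notMem fun x hx => hy (hst hx)
    simp [this]

end MeasureTheory.Measure

theorem Real.volume_symmDiff_ball_le (a b r : ℝ) :
    volume (Metric.ball a r ∆ Metric.ball b r) ≤ ENNReal.ofReal (2 * dist a b) := by
  wlog hab : a ≤ b generalizing a b
  · simpa only [symmDiff_comm, dist_comm] using this b a (le_of_not_ge hab)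
  have hleft : Metric.ball a r \ Metric.ball b r ⊆ Ioc (a - r) (b - r) := by
    rintro x ⟨hxa, hxb⟩
    simp only [Real.ball_eq_Ioo, mem_Ioo, not_and_or, not_lt] at hxa hxb
    exact ⟨hxa.1, by rcases hxb with h | h <;> linarith⟩
  have hright : Metric.ball b r \ Metric.ball a r ⊆ Ico (a + r) (b + r) := by
    rintro x ⟨hxb, hxa⟩
    simp only [Real.ball_eq_Ioo, mem_Ioo, not_and_or, not_lt] at hxa hxb
    exact ⟨by rcases hxa with h | h <;> linarith, hxb.2⟩
  have hdist : dist a b = b - a := by rw [Real.dist_eq, abs_of_nonpos (by linarith)]; ring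
  calc volume (Metric.ball a r ∆ Metric.ball b r)
      ≤ volume (Ioc (a - r) (b - r)) + volume (Ico (a + r) (b + r)) :=
        (measure_union_le _ _).trans (add_le_add (measure_mono hleft) (measure_mono hright))
    _ = ENNReal.ofReal (2 * dist a b) := by
        rw [Real.volume_Ioc, Real.volume_Ico, ← ENNReal.ofReal_add (by linarith) (by linarith),
          hdist]
        ring_nf

theorem lintegral_Ioi_one_div_sq {a : ℝ} (ha : 0 < a) :
    ∫⁻ y in Ioi a, ENNReal.ofReal (1 / y ^ 2) = ENNReal.ofReal (1 / a) := by
  have hderiv : ∀ y ∈ Ici a, HasDerivAt (fun y : ℝ => -y⁻¹) (1 / y ^ 2) y := fun y hy => by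
    simpa [one_div] using (hasDerivAt_inv (ha.trans_le hy).ne').fun_neg
  have hlim : Tendsto (fun y : ℝ => -y⁻¹) atTop (𝓝 0) := by
    simpa using (tendsto_inv_atTop_zero (𝕜 := ℝ)).neg
  have hnonneg : ∀ y ∈ Ioi a, (0 : ℝ) ≤ 1 / y ^ 2 := fun y _ => by positivity
  rw [← ofReal_integral_eq_lintegral_ofReal
      (integrableOn_Ioi_deriv_of_nonneg' hderiv hnonneg hlim)
      (ae_of_all _ fun y => by positivity),
    integral_Ioi_of_hasDerivAt_of_nonneg' hderiv hnonneg hlim]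
  simp

noncomputable def invSqMeasure : Measure ℝ :=
  (volume.restrict (Ioi 0)).withDensity fun y => ENNReal.ofReal (1 / y ^ 2)

instance : SFinite invSqMeasure := by
  unfold invSqMeasure; infer_instance

theorem invSqMeasure_Ioi {a : ℝ} (ha : 0 < a) :
    invSqMeasure (Ioi a) = ENNReal.ofReal (1 / a) := by
  rw [invSqMeasure, withDensity_apply _ measurableSet_Ioi,
    Measure.restrict_restrict measurableSet_Ioi, Ioi_inter_Ioi, max_eq_left ha.le,
    lintegral_Ioi_one_div_sq ha]

theorem invSqMeasure_Ioc {a b : ℝ} (ha : 0 < a) (hab : a ≤ b) :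
    invSqMeasure (Ioc a b) = ENNReal.ofReal (1 / a - 1 / b) := by
  rw [← Ioi_sdiff_Ioi, measure_sdiff (Ioi_subset_Ioi hab) measurableSet_Ioi.nullMeasurableSet
      (by simp [invSqMeasure_Ioi (ha.trans_le hab)]),
    invSqMeasure_Ioi ha, invSqMeasure_Ioi (ha.trans_le hab),
    ENNReal.ofReal_sub _ (one_div_pos.2 (ha.trans_le hab)).le]

theorem hypMeasure_eq_prod : hypMeasure = volume.prod invSqMeasure := by
  rw [invSqMeasure, prod_withDensity_right (by fun_prop),
    ← Measure.restrict_univ (μ := volume), Measure.prod_restrict, univ_prod, Measure.restrict_univ]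
  rfl

theorem measurableSet_htrans_Utrunc (ε δ u : ℝ) : MeasurableSet (htrans (Utrunc ε δ) u) := by
  have hU : MeasurableSet (Utrunc ε δ) := by
    simp only [Utrunc, ofPred_and]
    measurability
  exact hU.preimage (by fun_prop : Measurable fun p : ℝ × ℝ => (p.1 - u, p.2))

theorem htrans_Utrunc_subset (ε δ u : ℝ) :
    htrans (Utrunc ε δ) u ⊆ {p | ε < p.2 ∧ dist p.1 u < p.2 / 2} := by
  rintro p ⟨-, hp, -⟩
  rw [max_lt_iff] at hp
  exact ⟨hp.2, by rw [Real.dist_eq]; linarith [hp.1]⟩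

theorem mem_htrans_Utrunc_of_lt {ε δ u : ℝ} {p : ℝ × ℝ} (hp : ε < p.2) :
    p ∈ htrans (Utrunc ε δ) u ↔ dist p.1 u < p.2 / 2 ∧ p.2 ≤ δ := by
  simp only [htrans, Utrunc, mem_ofPred_eq, max_lt_iff, Real.dist_eq]
  constructor
  · rintro ⟨-, ⟨h, -⟩, hδ⟩
    exact ⟨by linarith, hδ⟩
  · rintro ⟨h, hδ⟩
    exact ⟨by linarith, ⟨by linarith, hp⟩, hδ⟩

theorem preimage_htrans_Utrunc {ε δ u y : ℝ} (hεy : ε < y) (hyδ : y ≤ δ) :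
    (fun x => (x, y)) ⁻¹' htrans (Utrunc ε δ) u = Metric.ball u (y / 2) := by
  ext x
  simp [mem_htrans_Utrunc_of_lt (p := (x, y)) hεy, hyδ, Metric.mem_ball]

theorem hypMeasure_symmDiff_htrans_Utrunc_same_shift_le {ε₁ ε₂ : ℝ} (hε₁ : 0 < ε₁)
    (hε₂ : 0 < ε₂) (δ u : ℝ) :
    hypMeasure (htrans (Utrunc ε₁ δ) u ∆ htrans (Utrunc ε₂ δ) u) ≤
      ENNReal.ofReal (|ε₁ - ε₂| / min ε₁ ε₂) := by
  set m := min ε₁ ε₂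
  set M := max ε₁ ε₂
  have hm : 0 < m := lt_min hε₁ hε₂
  have hsupp : htrans (Utrunc ε₁ δ) u ∆ htrans (Utrunc ε₂ δ) u ⊆ Prod.snd ⁻¹' Ioc m M := by
    intro p hp
    have hlow : m < p.2 := by
      rcases mem_symmDiff.1 hp with ⟨h, -⟩ | ⟨h, -⟩
      · exact (min_le_left _ _).trans_lt (htrans_Utrunc_subset _ _ _ h).1
      · exact (min_le_right _ _).trans_lt (htrans_Utrunc_subset _ _ _ h).1
    have hhigh : p.2 ≤ M := by
      by_contra! hM
      rw [mem_symmDiff, mem_htrans_Utrunc_of_lt ((le_max_left ε₁ ε₂).trans_lt hM),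
        mem_htrans_Utrunc_of_lt ((le_max_right ε₁ ε₂).trans_lt hM)] at hp
      tauto
    exact ⟨hlow, hhigh⟩
  have hsec : ∀ y ∈ Ioc m M,
      volume ((fun x => (x, y)) ⁻¹' (htrans (Utrunc ε₁ δ) u ∆ htrans (Utrunc ε₂ δ) u)) ≤
        ENNReal.ofReal M := by
    intro y hy
    have hball : (fun x => (x, y)) ⁻¹' (htrans (Utrunc ε₁ δ) u ∆ htrans (Utrunc ε₂ δ) u) ⊆
        Metric.ball u (y / 2) := by
      intro x hx
      rcases mem_symmDiff.1 hx with ⟨h, -⟩ | ⟨h, -⟩ <;> exact (htrans_Utrunc_subset _ _ _ h).2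
    calc _ ≤ volume (Metric.ball u (y / 2)) := measure_mono hball
      _ = ENNReal.ofReal y := by rw [Real.volume_ball]; ring_nf
      _ ≤ ENNReal.ofReal M := ENNReal.ofReal_le_ofReal hy.2
  calc _ ≤ ENNReal.ofReal M * invSqMeasure (Ioc m M) := by
        rw [hypMeasure_eq_prod]
        exact Measure.prod_apply_le_mul_of_sections_le
          ((measurableSet_htrans_Utrunc _ _ _).symmDiff (measurableSet_htrans_Utrunc _ _ _))
          measurableSet_Ioc hsupp hsec
    _ = ENNReal.ofReal (|ε₁ - ε₂| / m) := by
        have hd : |ε₁ - ε₂| = M - m := (max_sub_min_eq_abs' ε₁ ε₂).symm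
        rw [invSqMeasure_Ioc hm min_le_max, ← ENNReal.ofReal_mul (hm.trans_le min_le_max).le, hd]
        congr 1
        rw [mul_sub, mul_one_div_cancel (hm.trans_le min_le_max).ne', sub_div, div_self hm.ne',
          mul_one_div]

theorem hypMeasure_symmDiff_htrans_Utrunc_same_cutoff_le {ε : ℝ} (hε : 0 < ε) (δ x₁ x₂ : ℝ) :
    hypMeasure (htrans (Utrunc ε δ) x₁ ∆ htrans (Utrunc ε δ) x₂) ≤
      ENNReal.ofReal (2 * |x₁ - x₂| / ε) := by
  have hsupp : htrans (Utrunc ε δ) x₁ ∆ htrans (Utrunc ε δ) x₂ ⊆ Prod.snd ⁻¹' Ioi ε := by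
    intro p hp
    rcases mem_symmDiff.1 hp with ⟨h, -⟩ | ⟨h, -⟩ <;> exact (htrans_Utrunc_subset _ _ _ h).1
  have hsec : ∀ y ∈ Ioi ε,
      volume ((fun x => (x, y)) ⁻¹' (htrans (Utrunc ε δ) x₁ ∆ htrans (Utrunc ε δ) x₂)) ≤
        ENNReal.ofReal (2 * |x₁ - x₂|) := by
    intro y hy
    rw [preimage_symmDiff]
    by_cases hyδ : y ≤ δ
    · rw [preimage_htrans_Utrunc hy hyδ, preimage_htrans_Utrunc hy hyδ, ← Real.dist_eq]
      exact Real.volume_symmDiff_ball_le _ _ _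
    · have hempty : ∀ u, (fun x => (x, y)) ⁻¹' htrans (Utrunc ε δ) u = ∅ := fun u =>
        eq_empty_of_forall_notMem fun _ hx => hyδ hx.2.2
      simp [hempty]
  calc _ ≤ ENNReal.ofReal (2 * |x₁ - x₂|) * invSqMeasure (Ioi ε) := by
        rw [hypMeasure_eq_prod]
        exact Measure.prod_apply_le_mul_of_sections_le
          ((measurableSet_htrans_Utrunc _ _ _).symmDiff (measurableSet_htrans_Utrunc _ _ _))
          measurableSet_Ioi hsupp hsec
    _ = ENNReal.ofReal (2 * |x₁ - x₂| / ε) := by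
        rw [invSqMeasure_Ioi hε, ← ENNReal.ofReal_mul (by positivity), mul_one_div]

theorem hypMeasure_symmDiff_htrans_Utrunc_le_general (δ ε₁ ε₂ : ℝ)
    (hε₁ : 0 < ε₁) (hε₂ : 0 < ε₂) (x₁ x₂ : ℝ) :
    hypMeasure (symmDiff (htrans (Utrunc ε₁ δ) x₁) (htrans (Utrunc ε₂ δ) x₂)) ≤
      ENNReal.ofReal (2 * (|x₁ - x₂| + |ε₁ - ε₂|) / min ε₁ ε₂) := by
  have hm : 0 < min ε₁ ε₂ := lt_min hε₁ hε₂
  have hshift : 2 * |x₁ - x₂| / ε₂ ≤ 2 * |x₁ - x₂| / min ε₁ ε₂ :=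
    div_le_div_of_nonneg_left (by positivity) hm (min_le_right _ _)
  have hcutoff : |ε₁ - ε₂| / min ε₁ ε₂ ≤ 2 * |ε₁ - ε₂| / min ε₁ ε₂ := by
    gcongr
    linarith [abs_nonneg (ε₁ - ε₂)]
  calc _ ≤ hypMeasure (htrans (Utrunc ε₁ δ) x₁ ∆ htrans (Utrunc ε₂ δ) x₁) +
        hypMeasure (htrans (Utrunc ε₂ δ) x₁ ∆ htrans (Utrunc ε₂ δ) x₂) :=
        (measure_mono (symmDiff_triangle _ _ _)).trans (measure_union_le _ _)
    _ ≤ ENNReal.ofReal (|ε₁ - ε₂| / min ε₁ ε₂) + ENNReal.ofReal (2 * |x₁ - x₂| / ε₂) :=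
        add_le_add (hypMeasure_symmDiff_htrans_Utrunc_same_shift_le hε₁ hε₂ δ x₁)
          (hypMeasure_symmDiff_htrans_Utrunc_same_cutoff_le hε₂ δ x₁ x₂)
    _ ≤ ENNReal.ofReal (2 * (|x₁ - x₂| + |ε₁ - ε₂|) / min ε₁ ε₂) := by
        rw [← ENNReal.ofReal_add (by positivity) (by positivity)]
        refine ENNReal.ofReal_le_ofReal ?_
        rw [mul_add, add_div]
        linarith

/-- For `δ > 0`, `0 < ε₁ ≤ δ`, `0 < ε₂ ≤ δ` and all real `x₁, x₂`, the hyperbolic measure of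
the symmetric difference of the two translated truncated regions satisfies
`λ((U_{ε₁}^δ + x₁) Δ (U_{ε₂}^δ + x₂)) ≤ 2·(|x₁ − x₂| + |ε₁ − ε₂|) / min(ε₁, ε₂)`. -/
theorem hypMeasure_symmDiff_htrans_Utrunc_le (δ ε₁ ε₂ : ℝ) (hδ : 0 < δ)
    (hε₁ : 0 < ε₁) (hε₁δ : ε₁ ≤ δ) (hε₂ : 0 < ε₂) (hε₂δ : ε₂ ≤ δ) (x₁ x₂ : ℝ) :
    hypMeasure (symmDiff (htrans (Utrunc ε₁ δ) x₁) (htrans (Utrunc ε₂ δ) x₂)) ≤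
      ENNReal.ofReal (2 * (|x₁ - x₂| + |ε₁ - ε₂|) / min ε₁ ε₂) :=
  hypMeasure_symmDiff_htrans_Utrunc_le_general δ ε₁ ε₂ hε₁ hε₂ x₁ x₂
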